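/- For every real x > −1, 2 / (x + √(x² + 4)) ≤ e^{x²/2} ∫_x^∞ e^{−t²/2} dt. -/

import Mathlib

open Real MeasureTheory Set Filter Topology

private lemma komatsu_key (t s : ℝ) (hs : 0 < s) (hs2 : s^2 = t^2+4) :
    t^3 + 3*t ≤ (t^2+1)*s := by
  have h1 : 0 ≤ (t^2+1)*s := by positivity
  by_contra h
  push_neg at h
  have h4 : (t^2+1)^2*s^2 = (t^2+1)^2*(t^2+4) := by rw [hs2]
  nlinarith [mul_pos (sub_pos.2 h) (by linarith : (0:ℝ) < t^3+3*t + (t^2+1)*s)]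

private lemma komatsu_key2 (t s : ℝ) (hs : 0 < s) (hs2 : s^2 = t^2+4) :
    0 ≤ t^3 + 3*t + (t^2+7)*s := by
  rcases le_or_gt 0 t with ht | ht
  · have : 0 ≤ (t^2+7)*s := by positivity
    nlinarith
  · by_contra h
    push_neg at h
    have h2 : (t^2+7)*s < -(t^3+3*t) := by linarith
    have h3 : 0 < (t^2+7)*s := by positivity
    nlinarith [mul_pos (sub_pos.2 h2) (by linarith : (0:ℝ) < -(t^3+3*t) + (t^2+7)*s)]

theorem gaussian_tail_lower_bound (x : ℝ) (hx : -1 < x) :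
    2 / (x + Real.sqrt (x ^ 2 + 4)) ≤
      Real.exp (x ^ 2 / 2) * (∫ t in Set.Ici x, Real.exp (-t ^ 2 / 2)) := by
  set s : ℝ → ℝ := fun t => Real.sqrt (t^2+4) with hs_def
  have s_pos : ∀ t, 0 < s t := fun t => Real.sqrt_pos.2 (by positivity)
  have s_sq : ∀ t, (s t)^2 = t^2+4 := fun t => Real.sq_sqrt (by positivity)
  set F : ℝ → ℝ := fun t => -(Real.exp (-t^2/2) * ((s t - t)/2)) with hF_def
  set G : ℝ → ℝ := fun t =>
    Real.exp (-t^2/2) * ((t * (s t - t) - (t / s t - 1))/2) with hG_def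
  -- derivative
  have hF : ∀ t, HasDerivAt F (G t) t := by
    intro t
    have hsq : HasDerivAt (fun t : ℝ => t^2+4) (2*t) t := by
      simpa using (hasDerivAt_pow 2 t).add_const 4
    have hsqrt : HasDerivAt s (1/(2*s t) * (2*t)) t :=
      (Real.hasDerivAt_sqrt (by positivity : t^2+4 ≠ 0)).comp t hsq
    have hf0 : HasDerivAt (fun t => (s t - t)/2) ((1/(2*s t) * (2*t) - 1)/2) t :=
      (hsqrt.sub (hasDerivAt_id t)).div_const 2
    have hf : HasDerivAt (fun t => (s t - t)/2) ((t / s t - 1)/2) t := by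
      convert hf0 using 1
      have hst := (s_pos t).ne'
      field_simp
    have hinner : HasDerivAt (fun t : ℝ => -t^2/2) (-t) t := by
      have := ((hasDerivAt_pow 2 t).neg).div_const 2
      simpa using this.congr_deriv (by ring)
    have hexp : HasDerivAt (fun t : ℝ => Real.exp (-t^2/2))
        (Real.exp (-t^2/2) * (-t)) t := (Real.hasDerivAt_exp _).comp t hinner
    have := (hexp.mul hf).neg
    exact this.congr_deriv (by simp only [hG_def]; ring)
  -- pointwise upper bound
  have hGle : ∀ t, G t ≤ Real.exp (-t^2/2) := by
    intro t
    have key := komatsu_key t (s t) (s_pos t) (s_sq t)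
    have hst := (s_pos t)
    have h5 : t * s t - t / s t ≤ t^2 + 1 := by
      rw [show t * s t - t / s t = (t^3+3*t)/ s t from by
        field_simp; linear_combination t * (s_sq t)]
      rw [div_le_iff₀ hst]
      exact key
    have hq : (t * (s t - t) - (t / s t - 1))/2 ≤ 1 := by nlinarith
    calc G t ≤ Real.exp (-t^2/2) * 1 :=
          mul_le_mul_of_nonneg_left hq (Real.exp_pos _).le
      _ = Real.exp (-t^2/2) := mul_one _
  -- bound for integrability
  have hGbound : ∀ t, ‖G t‖ ≤ 4 * Real.exp (-(1/4) * t^2) := by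
    intro t
    have hst := s_pos t
    have key2 := komatsu_key2 t (s t) hst (s_sq t)
    have h5 : -(t^2 + 7) ≤ t * s t - t / s t := by
      rw [show t * s t - t / s t = (t^3+3*t)/ s t from by
        field_simp; linear_combination t * (s_sq t)]
      rw [le_div_iff₀ hst]
      nlinarith
    have key := komatsu_key t (s t) hst (s_sq t)
    have h6 : t * s t - t / s t ≤ t^2 + 1 := by
      rw [show t * s t - t / s t = (t^3+3*t)/ s t from by
        field_simp; linear_combination t * (s_sq t)]
      rw [div_le_iff₀ hst]
      exact key
    have hq : |(t * (s t - t) - (t / s t - 1))/2| ≤ t^2 + 3 := by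
      rw [abs_le]; constructor <;> nlinarith
    have h7 : ‖G t‖ = Real.exp (-t^2/2) * |(t * (s t - t) - (t / s t - 1))/2| := by
      rw [hG_def]
      simp only [norm_mul, Real.norm_eq_abs, abs_of_pos (Real.exp_pos _)]
    rw [h7]
    have h8 : Real.exp (-t^2/2) = Real.exp (-(1/4)*t^2) * Real.exp (-t^2/4) := by
      rw [← Real.exp_add]; ring_nf
    have h9 : Real.exp (-t^2/4) * (t^2+4) ≤ 4 := by
      have h1 : (t^2+4)/4 ≤ Real.exp (t^2/4) := by
        have := Real.add_one_le_exp (t^2/4); linarith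
      have h2 := mul_le_mul_of_nonneg_left h1 (Real.exp_pos (-t^2/4)).le
      have h3 : Real.exp (-t^2/4) * Real.exp (t^2/4) = 1 := by
        rw [← Real.exp_add]; ring_nf; exact Real.exp_zero
      nlinarith
    calc Real.exp (-t^2/2) * |(t * (s t - t) - (t / s t - 1))/2|
        ≤ Real.exp (-t^2/2) * (t^2 + 3) :=
          mul_le_mul_of_nonneg_left hq (Real.exp_pos _).le
      _ = Real.exp (-(1/4)*t^2) * (Real.exp (-t^2/4) * (t^2+3)) := by rw [h8]; ring
      _ ≤ Real.exp (-(1/4)*t^2) * 4 := by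
          apply mul_le_mul_of_nonneg_left _ (Real.exp_pos _).le
          nlinarith [Real.exp_pos (-t^2/4)]
      _ = 4 * Real.exp (-(1/4) * t^2) := by ring
  -- continuity of G
  have hscont : Continuous s := by
    apply Real.continuous_sqrt.comp; continuity
  have hGcont : Continuous G := by
    apply Continuous.mul
    · exact Real.continuous_exp.comp (by continuity)
    · apply Continuous.div_const
      apply Continuous.sub
      · exact continuous_id.mul (hscont.sub continuous_id)
      · exact (continuous_id.div hscont fun t => (s_pos t).ne').sub continuous_const
  -- integrability of G
  have hGint : IntegrableOn G (Ioi x) := by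
    have hmaj : Integrable (fun t : ℝ => 4 * Real.exp (-(1/4) * t^2)) :=
      (integrable_exp_neg_mul_sq (by norm_num : (0:ℝ) < 1/4)).const_mul 4
    exact (hmaj.mono' hGcont.aestronglyMeasurable
      (Eventually.of_forall hGbound)).integrableOn
  -- integrability of the gaussian
  have hEeq : (fun t : ℝ => Real.exp (-t^2/2)) = fun t => Real.exp (-(1/2) * t^2) := by
    funext t; ring_nf
  have hEint : IntegrableOn (fun t : ℝ => Real.exp (-t^2/2)) (Ioi x) := by
    rw [hEeq]
    exact (integrable_exp_neg_mul_sq one_half_pos).integrableOn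
  -- limit of F at infinity
  have hexp0 : Tendsto (fun t : ℝ => Real.exp (-t^2/2)) atTop (𝓝 0) := by
    have h1 : Tendsto (fun t : ℝ => t^2/2) atTop atTop :=
      (tendsto_pow_atTop two_ne_zero).atTop_div_const (by norm_num)
    have h2 : Tendsto (fun t : ℝ => -t^2/2) atTop atBot := by
      simp only [neg_div]
      exact tendsto_neg_atBot_iff.mpr h1
    exact Real.tendsto_exp_atBot.comp h2
  have hF0 : Tendsto F atTop (𝓝 0) := by
    have hpos : Tendsto (fun t : ℝ => Real.exp (-t^2/2) * ((s t - t)/2)) atTop (𝓝 0) := by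
      apply squeeze_zero' ?_ ?_ hexp0
      · filter_upwards with t
        have h1 : t ≤ s t := by nlinarith [s_pos t, s_sq t]
        have h2 : 0 ≤ (s t - t)/2 := by linarith
        exact mul_nonneg (Real.exp_pos _).le h2
      · filter_upwards [eventually_ge_atTop (0:ℝ)] with t ht
        have hle : s t ≤ t + 2 := by
          have h1 : t^2+4 ≤ (t+2)^2 := by nlinarith
          calc s t ≤ Real.sqrt ((t+2)^2) := Real.sqrt_le_sqrt h1
            _ = t + 2 := Real.sqrt_sq (by linarith)
        calc Real.exp (-t^2/2) * ((s t - t)/2) ≤ Real.exp (-t^2/2) * 1 := by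
              apply mul_le_mul_of_nonneg_left _ (Real.exp_pos _).le
              linarith
          _ = Real.exp (-t^2/2) := mul_one _
    simpa [hF_def] using hpos.neg
  -- FTC
  have hFTC : ∫ t in Ioi x, G t = 0 - F x :=
    integral_Ioi_of_hasDerivAt_of_tendsto' (fun t _ => hF t) hGint hF0
  have hmono : ∫ t in Ioi x, G t ≤ ∫ t in Ioi x, Real.exp (-t^2/2) :=
    setIntegral_mono_on hGint hEint measurableSet_Ioi (fun t _ => hGle t)
  have hchain : Real.exp (-x^2/2) * ((s x - x)/2) ≤ ∫ t in Ici x, Real.exp (-t^2/2) := by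
    rw [integral_Ici_eq_integral_Ioi]
    have : Real.exp (-x^2/2) * ((s x - x)/2) = 0 - F x := by rw [hF_def]; ring
    rw [this, ← hFTC]
    exact hmono
  -- finish
  have hxs : 0 < x + s x := by
    nlinarith [s_pos x, s_sq x]
  have h2f : 2/(x + s x) = (s x - x)/2 := by
    rw [div_eq_div_iff hxs.ne' (by norm_num : (2:ℝ) ≠ 0)]
    linear_combination - s_sq x
  rw [h2f]
  calc (s x - x)/2 = Real.exp (x^2/2) * (Real.exp (-x^2/2) * ((s x - x)/2)) := by
        rw [← mul_assoc, ← Real.exp_add, show x^2/2 + -x^2/2 = 0 by ring,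
          Real.exp_zero, one_mul]
    _ ≤ Real.exp (x^2/2) * ∫ t in Ici x, Real.exp (-t^2/2) :=
        mul_le_mul_of_nonneg_left hchain (Real.exp_pos _).le
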